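/- If m is even, then the generating function of the sequence χ(n) satisfies the formal power series identity (1 + x + x² − x³) · Σ_{n ≥ 0} χ(n) xⁿ = 1 − x (equivalently, Σ_{n ≥ 0} χ(n) xⁿ = (1−x)/(1+x+x²−x³)). -/

import Mathlib

/-- The defining properties of the cell-count function `C n d` of the Morse
complex `X_n^m` produced by the Comb Algorithm (with `C n 0` one less than the
number of `0`-cells). -/
def IsCombCount (m : ℕ) (C : ℤ → ℤ → ℤ) : Prop :=
  (∀ n d : ℤ, n < 0 → C n d = 0) ∧
  (∀ n d : ℤ, d < 0 → C n d = 0) ∧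
  (∀ n d : ℤ, 0 ≤ n → n ≤ 3 → 0 ≤ d →
    C n d =
      if n = 0 ∧ d = 0 then 1
      else if m = 2 then
        if n = 1 ∧ d = 1 then 2
        else if n = 2 ∧ d = 2 then 1
        else if n = 3 ∧ d = 2 then 2
        else 0
      else
        if n = 1 ∧ (d = 1 ∨ d = (m : ℤ) - 1) then 1
        else if n = 2 ∧ d = (m : ℤ) then 1
        else if n = 3 ∧ (d = 2 ∨ d = (m : ℤ)) then 1
        else 0) ∧
  (∀ n d : ℤ, 4 ≤ n →
    C n d = C (n - 3) (d - 2) + C (n - 4) (d - (m : ℤ) - 1) + C (n - 3) (d - (m : ℤ)))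

/-- The alternating sum `χ(n) = Σ_{d ≥ 0} (-1)^d C(n,d)` (a finite sum since
`C n d = 0` for all sufficiently large `d`). -/
noncomputable def chi (C : ℤ → ℤ → ℤ) (n : ℤ) : ℤ :=
  ∑ᶠ d : ℕ, (-1 : ℤ) ^ d * C n (d : ℤ)

lemma sum_shift (f : ℕ → ℤ) (s : ℕ) (h0 : ∀ d < s, f d = 0) (K : ℕ) :
    ∑ d ∈ Finset.range (K + s), f d = ∑ e ∈ Finset.range K, f (e + s) := by
  induction s generalizing f with
  | zero => simp
  | succ s ih =>
    have : K + (s + 1) = (K + s) + 1 := by ring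
    rw [this, Finset.sum_range_succ' f (K + s)]
    rw [ih (fun d => f (d + 1)) (fun d hd => h0 (d+1) (by omega)), h0 0 (by omega)]
    simp [add_assoc, add_comm 1 s]

lemma comb_vanish (m : ℕ) (C : ℤ → ℤ → ℤ) (hC : IsCombCount m C) :
    ∀ n d : ℤ, ((m : ℤ) + 1) * n < d → C n d = 0 := by
  obtain ⟨hneg, hdneg, hbase, hrec⟩ := hC
  have key : ∀ k : ℕ, ∀ d : ℤ, ((m : ℤ) + 1) * k < d → C k d = 0 := by
    intro k
    induction k using Nat.strong_induction_on with
    | _ k ih =>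
      intro d hd
      have hm0 : (0 : ℤ) ≤ (m : ℤ) := Int.natCast_nonneg m
      have hk0 : (0 : ℤ) ≤ (k : ℤ) := Int.natCast_nonneg k
      have hprod : (0 : ℤ) ≤ ((m : ℤ) + 1) * k := by positivity
      have hd0 : (0 : ℤ) ≤ d := by linarith
      rcases Nat.lt_or_ge k 4 with hk | hk
      · interval_cases k <;>
          (push_cast at hd
           rw [hbase _ _ (by norm_num) (by norm_num) hd0]
           split_ifs <;> omega)
      · have hk4 : (4 : ℤ) ≤ (k : ℤ) := by exact_mod_cast hk
        rw [hrec _ _ hk4]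
        have e3 : (k : ℤ) - 3 = ((k - 3 : ℕ) : ℤ) := by omega
        have e4 : (k : ℤ) - 4 = ((k - 4 : ℕ) : ℤ) := by omega
        rw [e3, e4]
        have h1 : C ((k - 3 : ℕ) : ℤ) (d - 2) = 0 := by
          apply ih (k - 3) (by omega)
          rw [← e3]
          have : ((m : ℤ) + 1) * ((k : ℤ) - 3) = ((m : ℤ) + 1) * k - 3 * ((m : ℤ) + 1) := by ring
          linarith
        have h2 : C ((k - 4 : ℕ) : ℤ) (d - (m : ℤ) - 1) = 0 := by
          apply ih (k - 4) (by omega)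
          rw [← e4]
          have : ((m : ℤ) + 1) * ((k : ℤ) - 4) = ((m : ℤ) + 1) * k - 4 * ((m : ℤ) + 1) := by ring
          linarith
        have h3 : C ((k - 3 : ℕ) : ℤ) (d - (m : ℤ)) = 0 := by
          apply ih (k - 3) (by omega)
          rw [← e3]
          have : ((m : ℤ) + 1) * ((k : ℤ) - 3) = ((m : ℤ) + 1) * k - 3 * ((m : ℤ) + 1) := by ring
          linarith
        rw [h1, h2, h3]; ring
  intro n d hd
  rcases lt_or_ge n 0 with h | h
  · exact hneg n d h
  · have hn : ((n.toNat : ℤ)) = n := Int.toNat_of_nonneg h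
    rw [← hn] at hd ⊢
    exact key n.toNat d hd

lemma chi_eq_sum (m : ℕ) (C : ℤ → ℤ → ℤ) (hC : IsCombCount m C) (n : ℤ) (N : ℕ)
    (hN : ((m : ℤ) + 1) * n < (N : ℤ)) :
    chi C n = ∑ d ∈ Finset.range N, (-1 : ℤ) ^ d * C n (d : ℤ) := by
  apply finsum_eq_finset_sum_of_support_subset
  intro d hd
  simp only [Function.mem_support] at hd
  simp only [Finset.coe_range, Set.mem_Iio]
  by_contra h
  push_neg at h
  have hdN : (N : ℤ) ≤ (d : ℤ) := by exact_mod_cast h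
  have : C n d = 0 := comb_vanish m C hC n d (by linarith)
  simp [this] at hd
lemma chi_zero (m : ℕ) (C : ℤ → ℤ → ℤ) (hC : IsCombCount m C) : chi C 0 = 1 := by
  obtain ⟨hneg, hdneg, hbase, hrec⟩ := hC
  unfold chi
  rw [finsum_eq_single _ 0]
  · push_cast
    rw [hbase 0 0 (by norm_num) (by norm_num) (by norm_num)]
    split_ifs <;> simp_all
  · intro d hd
    rw [hbase 0 d (by norm_num) (by norm_num) (by positivity)]
    split_ifs <;> (try ring) <;> (exfalso; omega)

lemma chi_one (m : ℕ) (hm : 2 ≤ m) (hme : Even m) (C : ℤ → ℤ → ℤ) (hC : IsCombCount m C) : chi C 1 = -2 := by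
  obtain ⟨hneg, hdneg, hbase, hrec⟩ := hC
  unfold chi
  by_cases h2 : m = 2
  · rw [finsum_eq_single _ 1]
    · push_cast
      rw [hbase 1 1 (by norm_num) (by norm_num) (by norm_num)]
      split_ifs <;> (try ring) <;> (exfalso; omega)
    · intro d hd
      rw [hbase 1 d (by norm_num) (by norm_num) (by positivity)]
      split_ifs <;> (try ring) <;> (exfalso; omega)
  · have hm4 : 4 ≤ m := by
      rcases hme with ⟨j, hj⟩; omega
    have hodd : Odd (m - 1) := Nat.Even.sub_odd (by omega) hme odd_one
    have hcast : ((m - 1 : ℕ) : ℤ) = (m : ℤ) - 1 := by omega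
    rw [finsum_eq_finset_sum_of_support_subset _ (s := {1, m - 1}) ?_]
    · rw [Finset.sum_pair (by omega)]
      push_cast [hcast]
      rw [hbase 1 1 (by norm_num) (by norm_num) (by norm_num),
        hbase 1 ((m:ℤ) - 1) (by norm_num) (by norm_num) (by omega)]
      split_ifs <;> (try (exfalso; omega))
      rw [hodd.neg_one_pow]
      ring
    · intro d hd
      simp only [Function.mem_support] at hd
      simp only [Finset.coe_insert, Finset.coe_singleton, Set.mem_insert_iff,
        Set.mem_singleton_iff]
      by_contra h
      push_neg at h
      obtain ⟨h1, h2'⟩ := h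
      apply hd
      rw [hbase 1 d (by norm_num) (by norm_num) (by positivity)]
      split_ifs <;> (try ring) <;> (exfalso; omega)

lemma chi_two (m : ℕ) (hm : 2 ≤ m) (hme : Even m) (C : ℤ → ℤ → ℤ) (hC : IsCombCount m C) : chi C 2 = 1 := by
  obtain ⟨hneg, hdneg, hbase, hrec⟩ := hC
  unfold chi
  rw [finsum_eq_single _ m]
  · rw [hbase 2 (m:ℤ) (by norm_num) (by norm_num) (by positivity)]
    rw [hme.neg_one_pow, one_mul]
    split_ifs <;> (try rfl) <;> (exfalso; omega)
  · intro d hd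
    rw [hbase 2 d (by norm_num) (by norm_num) (by positivity)]
    split_ifs <;> (try ring) <;> (exfalso; omega)

lemma chi_three (m : ℕ) (hm : 2 ≤ m) (hme : Even m) (C : ℤ → ℤ → ℤ) (hC : IsCombCount m C) : chi C 3 = 2 := by
  obtain ⟨hneg, hdneg, hbase, hrec⟩ := hC
  unfold chi
  by_cases h2 : m = 2
  · rw [finsum_eq_single _ 2]
    · push_cast
      rw [hbase 3 2 (by norm_num) (by norm_num) (by norm_num)]
      split_ifs <;> (try ring) <;> (exfalso; omega)
    · intro d hd
      rw [hbase 3 d (by norm_num) (by norm_num) (by positivity)]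
      split_ifs <;> (try ring) <;> (exfalso; omega)
  · have hm4 : 4 ≤ m := by rcases hme with ⟨j, hj⟩; omega
    rw [finsum_eq_finset_sum_of_support_subset _ (s := {2, m}) ?_]
    · rw [Finset.sum_pair (by omega)]
      push_cast
      rw [hbase 3 2 (by norm_num) (by norm_num) (by norm_num),
        hbase 3 (m:ℤ) (by norm_num) (by norm_num) (by positivity)]
      rw [hme.neg_one_pow]
      split_ifs <;> (try (exfalso; omega))
      ring
    · intro d hd
      simp only [Function.mem_support] at hd
      simp only [Finset.coe_insert, Finset.coe_singleton, Set.mem_insert_iff,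
        Set.mem_singleton_iff]
      by_contra h
      push_neg at h
      obtain ⟨h1, h2'⟩ := h
      apply hd
      rw [hbase 3 d (by norm_num) (by norm_num) (by positivity)]
      split_ifs <;> (try ring) <;> (exfalso; omega)

lemma shift_sum (g : ℤ → ℤ) (hg : ∀ x : ℤ, x < 0 → g x = 0) (s K : ℕ) :
    ∑ d ∈ Finset.range (K + s), (-1 : ℤ) ^ d * g ((d : ℤ) - s) =
    (-1 : ℤ) ^ s * ∑ e ∈ Finset.range K, (-1 : ℤ) ^ e * g (e : ℤ) := by
  rw [sum_shift _ s (fun d hd => by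
      rw [hg ((d : ℤ) - s) (by push_cast; omega), mul_zero]) K,
    Finset.mul_sum]
  apply Finset.sum_congr rfl
  intro e _
  have h1 : ((e + s : ℕ) : ℤ) - s = (e : ℤ) := by push_cast; ring
  rw [h1, pow_add]; ring

lemma chi_rec (m : ℕ) (hm : 2 ≤ m) (hme : Even m) (C : ℤ → ℤ → ℤ) (hC : IsCombCount m C)
    (n : ℤ) (hn : 4 ≤ n) :
    chi C n = 2 * chi C (n - 3) - chi C (n - 4) := by
  obtain ⟨hneg, hdneg, hbase, hrec⟩ := hC
  have hC' : IsCombCount m C := ⟨hneg, hdneg, hbase, hrec⟩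
  have hm0 : (0 : ℤ) ≤ (m : ℤ) := Int.natCast_nonneg m
  set t := n.toNat with ht
  have htn : (t : ℤ) = n := Int.toNat_of_nonneg (by linarith)
  set N : ℕ := t * (m + 1) + m + 2 with hN
  have hcastN : (N : ℤ) = n * ((m : ℤ) + 1) + m + 2 := by rw [hN]; push_cast [htn]; ring
  have hexp : ((m : ℤ) + 1) * n = n * ((m : ℤ) + 1) := by ring
  have hmain : chi C n = ∑ d ∈ Finset.range N, (-1 : ℤ) ^ d * C n (d : ℤ) := by
    apply chi_eq_sum m C hC'
    rw [hcastN]; linarith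
  rw [hmain]
  have hsplit : ∀ d ∈ Finset.range N, (-1 : ℤ) ^ d * C n (d : ℤ) =
      (-1 : ℤ) ^ d * C (n - 3) ((d : ℤ) - 2) +
      (-1 : ℤ) ^ d * C (n - 4) ((d : ℤ) - ((m + 1 : ℕ) : ℤ)) +
      (-1 : ℤ) ^ d * C (n - 3) ((d : ℤ) - m) := by
    intro d _
    rw [hrec n d hn]
    push_cast
    ring_nf
  rw [Finset.sum_congr rfl hsplit, Finset.sum_add_distrib, Finset.sum_add_distrib]
  have hg3 : ∀ x : ℤ, x < 0 → C (n - 3) x = 0 := fun x hx => hdneg _ _ hx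
  have hg4 : ∀ x : ℤ, x < 0 → C (n - 4) x = 0 := fun x hx => hdneg _ _ hx
  have T1 : ∑ d ∈ Finset.range N, (-1 : ℤ) ^ d * C (n - 3) ((d : ℤ) - 2)
      = chi C (n - 3) := by
    have hc2 : ∀ d ∈ Finset.range N, (-1 : ℤ) ^ d * C (n - 3) ((d : ℤ) - 2)
        = (-1 : ℤ) ^ d * C (n - 3) ((d : ℤ) - ((2 : ℕ) : ℤ)) := by intro d _; norm_num
    rw [Finset.sum_congr rfl hc2]
    have hNe : N = (t * (m + 1) + m) + 2 := by omega
    rw [hNe, shift_sum _ hg3 2 (t * (m + 1) + m)]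
    norm_num
    refine (chi_eq_sum m C hC' (n - 3) _ ?_).symm
    have hc : ((t * (m + 1) + m : ℕ) : ℤ) = n * ((m : ℤ) + 1) + m := by push_cast [htn]; ring
    rw [hc]
    have : ((m : ℤ) + 1) * (n - 3) = n * ((m : ℤ) + 1) - 3 * ((m : ℤ) + 1) := by ring
    linarith
  have T2 : ∑ d ∈ Finset.range N, (-1 : ℤ) ^ d * C (n - 4) ((d : ℤ) - ((m + 1 : ℕ) : ℤ))
      = - chi C (n - 4) := by
    have hNe : N = (t * (m + 1) + 1) + (m + 1) := by omega
    rw [hNe, shift_sum _ hg4 (m + 1) (t * (m + 1) + 1)]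
    rw [pow_succ, hme.neg_one_pow, one_mul]
    rw [neg_one_mul, neg_inj]
    refine (chi_eq_sum m C hC' (n - 4) _ ?_).symm
    have hc : ((t * (m + 1) + 1 : ℕ) : ℤ) = n * ((m : ℤ) + 1) + 1 := by push_cast [htn]; ring
    rw [hc]
    have : ((m : ℤ) + 1) * (n - 4) = n * ((m : ℤ) + 1) - 4 * ((m : ℤ) + 1) := by ring
    linarith
  have T3 : ∑ d ∈ Finset.range N, (-1 : ℤ) ^ d * C (n - 3) ((d : ℤ) - (m : ℤ))
      = chi C (n - 3) := by
    have hNe : N = (t * (m + 1) + 2) + m := by omega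
    rw [hNe, shift_sum _ hg3 m (t * (m + 1) + 2)]
    rw [hme.neg_one_pow, one_mul]
    refine (chi_eq_sum m C hC' (n - 3) _ ?_).symm
    have hc : ((t * (m + 1) + 2 : ℕ) : ℤ) = n * ((m : ℤ) + 1) + 2 := by push_cast [htn]; ring
    rw [hc]
    have : ((m : ℤ) + 1) * (n - 3) = n * ((m : ℤ) + 1) - 3 * ((m : ℤ) + 1) := by ring
    linarith
  rw [T1, T2, T3]; ring
lemma chi_sum_zero (m : ℕ) (hm : 2 ≤ m) (hme : Even m) (C : ℤ → ℤ → ℤ)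
    (hC : IsCombCount m C) :
    ∀ k : ℕ, chi C ((k : ℤ) + 3) + chi C ((k : ℤ) + 2) + chi C ((k : ℤ) + 1)
      - chi C (k : ℤ) = 0 := by
  intro k
  induction k with
  | zero =>
    norm_num
    rw [chi_zero m C hC, chi_one m hm hme C hC, chi_two m hm hme C hC,
      chi_three m hm hme C hC]
    ring
  | succ k ih =>
    have hk0 : (0 : ℤ) ≤ (k : ℤ) := Int.natCast_nonneg k
    have hr := chi_rec m hm hme C hC ((k : ℤ) + 4) (by linarith)
    have e1 : (k : ℤ) + 4 - 3 = (k : ℤ) + 1 := by ring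
    have e2 : (k : ℤ) + 4 - 4 = (k : ℤ) := by ring
    rw [e1, e2] at hr
    push_cast
    have g1 : (k : ℤ) + 1 + 3 = (k : ℤ) + 4 := by ring
    have g2 : (k : ℤ) + 1 + 2 = (k : ℤ) + 3 := by ring
    have g3 : (k : ℤ) + 1 + 1 = (k : ℤ) + 2 := by ring
    rw [g1, g2, g3, hr]
    linarith

open PowerSeries in
theorem stmt_2 (m : ℕ) (hm : 2 ≤ m) (hme : Even m) (C : ℤ → ℤ → ℤ)
    (hC : IsCombCount m C) :
    (1 + X + X ^ 2 - X ^ 3 : PowerSeries ℤ) * PowerSeries.mk (fun n : ℕ => chi C (n : ℤ))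
      = 1 - X := by
  ext n
  set F := PowerSeries.mk (fun n : ℕ => chi C (n : ℤ)) with hF
  have hexp : (1 + X + X ^ 2 - X ^ 3 : PowerSeries ℤ) * F
      = F + X ^ 1 * F + X ^ 2 * F - X ^ 3 * F := by ring
  rw [hexp, map_sub, map_add, map_add]
  rw [PowerSeries.coeff_X_pow_mul', PowerSeries.coeff_X_pow_mul',
    PowerSeries.coeff_X_pow_mul']
  rw [map_sub, PowerSeries.coeff_one, PowerSeries.coeff_X, hF]
  simp only [PowerSeries.coeff_mk]
  match n with
  | 0 => norm_num [chi_zero m C hC]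
  | 1 => norm_num [chi_zero m C hC, chi_one m hm hme C hC]
  | 2 => norm_num [chi_zero m C hC, chi_one m hm hme C hC, chi_two m hm hme C hC]
  | 3 =>
    norm_num [chi_zero m C hC, chi_one m hm hme C hC, chi_two m hm hme C hC,
      chi_three m hm hme C hC]
  | (k + 4) =>
    have h := chi_sum_zero m hm hme C hC (k + 1)
    have g1 : ((k + 1 : ℕ) : ℤ) + 3 = (k : ℤ) + 4 := by push_cast; ring
    have g2 : ((k + 1 : ℕ) : ℤ) + 2 = (k : ℤ) + 3 := by push_cast; ring
    have g3 : ((k + 1 : ℕ) : ℤ) + 1 = (k : ℤ) + 2 := by push_cast; ring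
    have g4 : ((k + 1 : ℕ) : ℤ) = (k : ℤ) + 1 := by push_cast; ring
    rw [g1, g2, g3, g4] at h
    norm_num
    push_cast
    have e2 : (k : ℤ) + 4 - 2 = (k : ℤ) + 2 := by ring
    have e3 : (k : ℤ) + 4 - 3 = (k : ℤ) + 1 := by ring
    simp only [e2, e3]
    linarith
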